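/- Let x be a real sequence such that the partial sums Σ_{k=0}^n x_k are bounded (i.e., there is M with |Σ_{k=0}^n x_k| ≤ M for all n). Then there exists a bounded real sequence y such that Σ_{k=2^n−1}^{2^{n+1}−2} x_k = y_{n+1} − y_n for every n ≥ 0. In particular, every S-invariant linear functional θ on l_∞ (not assumed continuous) vanishes on the bounded sequence { Σ_{k=2^n−1}^{2^{n+1}−2} x_k }_{n≥0}. -/
import Mathlib

open scoped BigOperators

/-- Membership in `l_∞`: the sequence is bounded. -/
def Bdd (x : ℕ → ℝ) : Prop := ∃ M : ℝ, ∀ n : ℕ, |x n| ≤ M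

/-- The right shift `S` on sequences: `(Sx)_0 = 0`, `(Sx)_{n+1} = x_n`. -/
def Sfun (x : ℕ → ℝ) : ℕ → ℝ
  | 0 => 0
  | n + 1 => x n

/-- `θ` is a linear functional on `l_∞` (not assumed continuous). -/
def IsLinearLinfty (θ : (ℕ → ℝ) → ℝ) : Prop :=
  (∀ x y : ℕ → ℝ, Bdd x → Bdd y → θ (x + y) = θ x + θ y) ∧
  (∀ (c : ℝ) (x : ℕ → ℝ), Bdd x → θ (c • x) = c * θ x)

/-- `θ` is `S`-invariant on `l_∞`. -/
def SInvariant (θ : (ℕ → ℝ) → ℝ) : Prop :=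
  ∀ x : ℕ → ℝ, Bdd x → θ (Sfun x) = θ x

lemma bdd_smul (c : ℝ) {a : ℕ → ℝ} (ha : Bdd a) : Bdd (c • a) := by
  obtain ⟨K, hK⟩ := ha
  exact ⟨|c| * K, fun n => by
    simp only [Pi.smul_apply, smul_eq_mul, abs_mul]
    exact mul_le_mul_of_nonneg_left (hK n) (abs_nonneg c)⟩

lemma bdd_S {a : ℕ → ℝ} (ha : Bdd a) : Bdd (Sfun a) := by
  obtain ⟨K, hK⟩ := ha
  refine ⟨max K 0, fun n => ?_⟩
  cases n with
  | zero => simp [Sfun]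
  | succ m => exact le_max_of_le_left (hK m) |>.trans_eq rfl

lemma bdd_shift {a : ℕ → ℝ} (ha : Bdd a) : Bdd (fun n => a (n + 1)) := by
  obtain ⟨K, hK⟩ := ha; exact ⟨K, fun n => hK (n + 1)⟩

lemma theta_sub {θ : (ℕ → ℝ) → ℝ} (hθ : IsLinearLinfty θ) {a b : ℕ → ℝ}
    (ha : Bdd a) (hb : Bdd b) : θ (a + (-1 : ℝ) • b) = θ a - θ b := by
  rw [hθ.1 a _ ha (bdd_smul _ hb), hθ.2 (-1) b hb]; ring

lemma key {θ : (ℕ → ℝ) → ℝ} (hθ : IsLinearLinfty θ) (hS : SInvariant θ)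
    {y : ℕ → ℝ} (hy : Bdd y) : θ (fun n => y (n + 1) - y n) = 0 := by
  set w : ℕ → ℝ := fun n => y (n + 1) with hw
  have hbw : Bdd w := bdd_shift hy
  set e0 : ℕ → ℝ := fun n => if n = 0 then 1 else 0 with he0
  have hbe0 : Bdd e0 := ⟨1, fun n => by cases n <;> simp [he0]⟩
  have hbc : Bdd (fun _ : ℕ => (1 : ℝ)) := ⟨1, fun n => by simp⟩
  have hθe0 : θ e0 = 0 := by
    have h1 : e0 = (fun _ : ℕ => (1 : ℝ)) + (-1 : ℝ) • Sfun (fun _ => 1) := by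
      funext n; cases n <;> simp [he0, Sfun]
    rw [h1, theta_sub hθ hbc (bdd_S hbc), hS _ hbc, sub_self]
  have hy' : y = Sfun w + (y 0) • e0 := by
    funext n; cases n <;> simp [Sfun, he0, hw]
  have hθy : θ y = θ w := by
    rw [hy', hθ.1 _ _ (bdd_S hbw) (bdd_smul _ hbe0), hθ.2 _ _ hbe0, hθe0,
      hS _ hbw]
    ring
  have h2 : (fun n => y (n + 1) - y n) = w + (-1 : ℝ) • y := by
    funext n; simp [hw]; ring
  rw [h2, theta_sub hθ hbw hy, hθy, sub_self]

/-- If the partial sums of `x` are bounded, then the dyadic block sums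
`Σ_{k=2^n-1}^{2^{n+1}-2} x_k` form a sequence of the form `y_{n+1} - y_n` for a
bounded sequence `y`; in particular every `S`-invariant linear functional on `l_∞`
vanishes on the (bounded) sequence of dyadic block sums. -/
theorem stmt_12 (x : ℕ → ℝ) (M : ℝ)
    (hM : ∀ n : ℕ, |∑ k ∈ Finset.range (n + 1), x k| ≤ M) :
    (∃ y : ℕ → ℝ, Bdd y ∧ ∀ n : ℕ,
        ∑ k ∈ Finset.Icc (2 ^ n - 1) (2 ^ (n + 1) - 2), x k = y (n + 1) - y n) ∧
    (∀ θ : (ℕ → ℝ) → ℝ, IsLinearLinfty θ → SInvariant θ →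
        θ (fun n => ∑ k ∈ Finset.Icc (2 ^ n - 1) (2 ^ (n + 1) - 2), x k) = 0) := by
  set y : ℕ → ℝ := fun n => ∑ k ∈ Finset.range (2 ^ n - 1), x k with hy
  have hbdd : Bdd y := by
    refine ⟨max M 0, fun n => ?_⟩
    rcases Nat.eq_zero_or_pos (2 ^ n - 1) with h | h
    · simp [hy, h]
    · obtain ⟨m, hm⟩ := Nat.exists_eq_add_of_lt h
      rw [hy]
      simp only []
      rw [show 2 ^ n - 1 = m + 1 by omega]
      exact le_max_of_le_left (hM m)
  have hblock : ∀ n : ℕ,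
      ∑ k ∈ Finset.Icc (2 ^ n - 1) (2 ^ (n + 1) - 2), x k = y (n + 1) - y n := by
    intro n
    have h1 : (1:ℕ) ≤ 2 ^ n := Nat.one_le_two_pow
    have h1' : (1:ℕ) ≤ 2 ^ (n+1) := Nat.one_le_two_pow
    have hle : 2 ^ n - 1 ≤ 2 ^ (n + 1) - 1 := by
      have := Nat.pow_le_pow_right (by norm_num : 1 ≤ 2) (Nat.le_succ n); omega
    have hIcc : Finset.Icc (2 ^ n - 1) (2 ^ (n + 1) - 2)
        = Finset.Ico (2 ^ n - 1) (2 ^ (n + 1) - 1) := by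
      have : 2 ^ (n + 1) - 1 = (2 ^ (n + 1) - 2) + 1 := by omega
      rw [this, ← Finset.Ico_add_one_right_eq_Icc]
    rw [hIcc, Finset.sum_Ico_eq_sub _ hle]
  refine ⟨⟨y, hbdd, hblock⟩, fun θ hθ hS => ?_⟩
  have : (fun n => ∑ k ∈ Finset.Icc (2 ^ n - 1) (2 ^ (n + 1) - 2), x k)
      = fun n => y (n + 1) - y n := funext hblock
  rw [this]
  exact key hθ hS hbdd
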